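/- Tangents of canonical angles are controlled by the Schur-quotient block (Lemma 2.1). Let 1 ≤ p ≤ q < d and let X ∈ ℝ^{d×p} have invertible top block X_{(1:p,:)}. Let θ_1 ≤ … ≤ θ_p be the canonical angles between span(X) and the q-dimensional coordinate subspace span([I_q; 0]) (vectors supported on the first q coordinates). Then every θ_j < π/2 and, for ‖·‖ being either the spectral norm or the Frobenius norm, ‖diag(tan θ_1, …, tan θ_p)‖ ≤ ‖𝒯_q(X)‖. Moreover, if p = q the inequality is an equality. -/

import Mathlib

/-!
Write `X = A P` with `A` orthonormal and split the rows of `A` into its top `p × p` block `T`,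
its first `q` rows `U` and its last `d - q` rows `L`. Then `𝒯_q(X) = L T⁻¹`, the numbers
`cos² θ_j` are the eigenvalues `λ` of `S = Uᵀ U`, `S + Lᵀ L = 1`, and `Tᵀ T ≤ S` in the Loewner
order. For a unit eigenvector `v` of `S`, the vector `x = T v` has `‖x‖² ≤ λ` and
`‖L T⁻¹ x‖² = ‖L v‖² = 1 - λ`, whence `tan² θ = (1 - λ) / λ ≤ ‖L T⁻¹‖²`. In the Frobenius norm,
`∑ tan² θ_j = tr (Lᵀ L S⁻¹) ≤ tr (Lᵀ L (Tᵀ T)⁻¹) = ‖L T⁻¹‖_F²` because inversion reverses the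
Loewner order. When `p = q` we have `S = Tᵀ T`, and both bounds are attained.
-/

open Matrix

/-- Frobenius norm of a real matrix. -/
noncomputable def frobNorm {m n : ℕ} (A : Matrix (Fin m) (Fin n) ℝ) : ℝ :=
  Real.sqrt (∑ i, ∑ j, A i j ^ 2)

/-- Spectral norm (ℓ²-operator norm) of a real matrix. -/
noncomputable def specNorm {m n : ℕ} (A : Matrix (Fin m) (Fin n) ℝ) : ℝ :=
  sSup {c : ℝ | ∃ x : Fin n → ℝ, ∑ j, x j ^ 2 ≤ 1 ∧ c = Real.sqrt (∑ i, (A.mulVec x) i ^ 2)}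

/-- Top `p×p` block of a `d×p` matrix. -/
def topBlock {d p : ℕ} (h : p ≤ d) (X : Matrix (Fin d) (Fin p) ℝ) :
    Matrix (Fin p) (Fin p) ℝ :=
  Matrix.of fun i j => X (Fin.castLE h i) j

/-- `θ` enumerates the canonical angles between the column spans of the orthonormal
`A ∈ ℝ^{d×p}` and `B ∈ ℝ^{d×q}`: `θ` is nondecreasing with values in `[0, π/2]` and
the numbers `cos²θ_j` are (with multiplicity) the eigenvalues of `(AᵀB)(AᵀB)ᵀ`,
i.e. `cos θ_j` are the singular values of `AᵀB`. -/
def IsCanonAngles {d p q : ℕ} (A : Matrix (Fin d) (Fin p) ℝ)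
    (B : Matrix (Fin d) (Fin q) ℝ) (θ : Fin p → ℝ) : Prop :=
  Monotone θ ∧ (∀ j, 0 ≤ θ j ∧ θ j ≤ Real.pi / 2) ∧
  ∃ (h : ((Aᵀ * B) * (Aᵀ * B)ᵀ).IsHermitian) (e : Fin p ≃ Fin p),
    ∀ j, Real.cos (θ j) ^ 2 = h.eigenvalues (e j)

open scoped Matrix.Norms.L2Operator

section Norms

variable {m n : Type*} [Fintype m] [Fintype n]

lemma sq_norm_toLp (v : n → ℝ) : ‖WithLp.toLp 2 v‖ ^ 2 = v ⬝ᵥ v := by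
  rw [EuclideanSpace.real_norm_sq_eq]
  simp [dotProduct, sq]

variable [DecidableEq n]

lemma dotProduct_mulVec_self_le (A : Matrix m n ℝ) (x : n → ℝ) :
    (A *ᵥ x) ⬝ᵥ (A *ᵥ x) ≤ ‖A‖ ^ 2 * (x ⬝ᵥ x) := by
  classical
  rw [← sq_norm_toLp, ← sq_norm_toLp, ← mul_pow]
  exact pow_le_pow_left₀ (norm_nonneg _) (A.l2_opNorm_mulVec (WithLp.toLp 2 x)) 2

lemma l2_opNorm_le_of_dotProduct_le (A : Matrix m n ℝ) {c : ℝ} (hc : 0 ≤ c)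
    (h : ∀ x, (A *ᵥ x) ⬝ᵥ (A *ᵥ x) ≤ c ^ 2 * (x ⬝ᵥ x)) : ‖A‖ ≤ c := by
  rw [Matrix.l2_opNorm_def]
  refine ContinuousLinearMap.opNorm_le_bound _ hc fun x => ?_
  rw [← pow_le_pow_iff_left₀ (norm_nonneg _) (by positivity) two_ne_zero, mul_pow]
  have := h x.ofLp
  rwa [← sq_norm_toLp, ← sq_norm_toLp, WithLp.toLp_ofLp] at this

end Norms

lemma specNorm_eq_l2_opNorm {m n : ℕ} (A : Matrix (Fin m) (Fin n) ℝ) : specNorm A = ‖A‖ := by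
  rw [Matrix.l2_opNorm_def, ← ContinuousLinearMap.sSup_unitClosedBall_eq_norm, specNorm]
  congr 1
  ext c
  simp only [Set.mem_ofPred_eq, Set.mem_image, Metric.mem_closedBall, dist_zero_right]
  rw [← (WithLp.equiv 2 (Fin n → ℝ)).symm.exists_congr_right]
  simp [EuclideanSpace.norm_eq, Matrix.toLpLin_apply, eq_comm]

lemma frobNorm_eq_sqrt_trace {m n : ℕ} (A : Matrix (Fin m) (Fin n) ℝ) :
    frobNorm A = √(Aᵀ * A).trace := by
  rw [frobNorm, Finset.sum_comm]
  simp [Matrix.trace, Matrix.mul_apply, sq]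

lemma frobNorm_diagonal {n : ℕ} (t : Fin n → ℝ) : frobNorm (diagonal t) = √(∑ i, t i ^ 2) := by
  simp [frobNorm_eq_sqrt_trace, diagonal_mul_diagonal, sq]

section PosSemidef

variable {n r : Type*} [Fintype n] [Fintype r]

lemma dotProduct_mulVec_transpose_mul_self {R : Type*} [CommSemiring R] (M : Matrix r n R)
    (v : n → R) : v ⬝ᵥ ((Mᵀ * M) *ᵥ v) = (M *ᵥ v) ⬝ᵥ (M *ᵥ v) := by
  rw [← mulVec_mulVec, dotProduct_mulVec, vecMul_transpose]

lemma posSemidef_transpose_mul_self (M : Matrix r n ℝ) : (Mᵀ * M).PosSemidef := by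
  simpa [conjTranspose_eq_transpose_of_trivial] using posSemidef_conjTranspose_mul_self M

lemma trace_transpose_mul_self_mul_nonneg (L : Matrix r n ℝ) {M : Matrix n n ℝ}
    (hM : M.PosSemidef) : 0 ≤ (Lᵀ * L * M).trace := by
  rw [Matrix.mul_assoc, trace_mul_comm]
  simpa [conjTranspose_eq_transpose_of_trivial] using
    (hM.mul_mul_conjTranspose_same L).trace_nonneg

variable [DecidableEq n]

lemma posDef_transpose_mul_self_of_isUnit {T : Matrix n n ℝ} (hT : IsUnit T) :
    (Tᵀ * T).PosDef := by
  simpa [conjTranspose_eq_transpose_of_trivial] using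
    PosDef.conjTranspose_mul_self T (mulVec_injective_iff_isUnit.mpr hT)

lemma Matrix.PosDef.posSemidef_inv_sub_inv {G S : Matrix n n ℝ} (hG : G.PosDef)
    (hGS : (S - G).PosSemidef) : (G⁻¹ - S⁻¹).PosSemidef := by
  have hS : S.PosDef := by simpa using hG.add_posSemidef hGS
  have hG₀ : IsUnit G.det := (isUnit_iff_isUnit_det G).mp hG.isUnit
  have hS₀ : IsUnit S.det := (isUnit_iff_isUnit_det S).mp hS.isUnit
  have hsymm : (S⁻¹ - G⁻¹)ᴴ = S⁻¹ - G⁻¹ := (hS.inv.isHermitian.sub hG.inv.isHermitian).eq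
  -- completing the square: `G⁻¹ - S⁻¹` is a sum of congruences of `G` and of `S - G`
  have key : G⁻¹ - S⁻¹ = (S⁻¹ - G⁻¹)ᴴ * G * (S⁻¹ - G⁻¹) + (S⁻¹)ᴴ * (S - G) * S⁻¹ := by
    rw [hsymm, hS.inv.isHermitian.eq]
    simp only [sub_mul, mul_sub, Matrix.mul_assoc, mul_nonsing_inv G hG₀, nonsing_inv_mul S hS₀,
      Matrix.mul_one]
    rw [← Matrix.mul_assoc G⁻¹ G, nonsing_inv_mul G hG₀, Matrix.one_mul]
    abel
  rw [key]
  exact (hG.posSemidef.conjTranspose_mul_mul_same _).add (hGS.conjTranspose_mul_mul_same _)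

lemma trace_transpose_mul_self_of_mul_inv (T : Matrix n n ℝ) (L : Matrix r n ℝ) :
    ((L * T⁻¹)ᵀ * (L * T⁻¹)).trace = (Lᵀ * L * (Tᵀ * T)⁻¹).trace := by
  rw [Matrix.mul_inv_rev, transpose_mul, transpose_nonsing_inv, Matrix.mul_assoc, trace_mul_comm]
  simp only [Matrix.mul_assoc]

end PosSemidef

section Hermitian

open Unitary

variable {n : Type*} [Fintype n] [DecidableEq n] {S : Matrix n n ℝ}

lemma Matrix.IsHermitian.exists_dotProduct_mulVec_eq_eigenvalues (hS : S.IsHermitian) (i : n) :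
    ∃ v : n → ℝ, v ⬝ᵥ v = 1 ∧ v ⬝ᵥ (S *ᵥ v) = hS.eigenvalues i := by
  refine ⟨hS.eigenvectorBasis i, ?_, by simpa using (hS.eigenvalues_eq i).symm⟩
  rw [← sq_norm_toLp, WithLp.toLp_ofLp, hS.eigenvectorBasis.orthonormal.1 i, one_pow]

lemma Matrix.IsHermitian.eq_mul_diagonal_mul_star (hS : S.IsHermitian) :
    S = (hS.eigenvectorUnitary : Matrix n n ℝ) * diagonal hS.eigenvalues *
      star (hS.eigenvectorUnitary : Matrix n n ℝ) := by
  conv_lhs => rw [hS.spectral_theorem, conjStarAlgAut_apply]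
  rfl

lemma Matrix.IsHermitian.posSemidef_sub_smul_one (hS : S.IsHermitian) {c : ℝ}
    (hc : ∀ i, c ≤ hS.eigenvalues i) : (S - c • 1).PosSemidef := by
  set U := (hS.eigenvectorUnitary : Matrix n n ℝ)
  have hU : U * star U = 1 := mul_star_self_of_mem hS.eigenvectorUnitary.2
  have hdiag : (diagonal fun i => hS.eigenvalues i - c).PosSemidef :=
    posSemidef_diagonal_iff.mpr fun i => sub_nonneg.mpr (hc i)
  convert hdiag.mul_mul_conjTranspose_same U using 1
  rw [← star_eq_conjTranspose, ← diagonal_sub, ← smul_one_eq_diagonal, mul_sub, sub_mul,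
    Matrix.mul_smul, Matrix.mul_one, Matrix.smul_mul, hU, ← hS.eq_mul_diagonal_mul_star]

lemma Matrix.IsHermitian.trace_inv (hS : S.IsHermitian) (h : ∀ i, hS.eigenvalues i ≠ 0) :
    S⁻¹.trace = ∑ i, (hS.eigenvalues i)⁻¹ := by
  set U := (hS.eigenvectorUnitary : Matrix n n ℝ)
  have hU : U * star U = 1 := mul_star_self_of_mem hS.eigenvectorUnitary.2
  have hU' : star U * U = 1 := star_mul_self_of_mem hS.eigenvectorUnitary.2
  have hinv : S⁻¹ = U * diagonal (fun i => (hS.eigenvalues i)⁻¹) * star U := by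
    refine inv_eq_right_inv ?_
    have key : U * diagonal hS.eigenvalues * star U *
        (U * diagonal (fun i => (hS.eigenvalues i)⁻¹) * star U) = 1 := by
      simp only [Matrix.mul_assoc]
      rw [← Matrix.mul_assoc (star U), hU', Matrix.one_mul, ← Matrix.mul_assoc (diagonal _),
        diagonal_mul_diagonal]
      simp [h, hU]
    rwa [← hS.eq_mul_diagonal_mul_star] at key
  rw [hinv, trace_mul_cycle, hU', Matrix.one_mul, trace_diagonal]

end Hermitian

section SchurQuotient

variable {n r : Type*} [Fintype n] [DecidableEq n] [Fintype r]
  {S T : Matrix n n ℝ} {L : Matrix r n ℝ}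

lemma dotProduct_mulVec_add_of_add_eq_one (hSL : S + Lᵀ * L = 1) (v : n → ℝ) :
    v ⬝ᵥ (S *ᵥ v) + (L *ᵥ v) ⬝ᵥ (L *ᵥ v) = v ⬝ᵥ v := by
  rw [← dotProduct_mulVec_transpose_mul_self, ← dotProduct_add, ← add_mulVec, hSL, one_mulVec]

omit [DecidableEq n] in
lemma dotProduct_mulVec_le_of_posSemidef_sub (hTS : (S - Tᵀ * T).PosSemidef) (v : n → ℝ) :
    (T *ᵥ v) ⬝ᵥ (T *ᵥ v) ≤ v ⬝ᵥ (S *ᵥ v) := by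
  have := hTS.dotProduct_mulVec_nonneg v
  rwa [star_trivial, sub_mulVec, dotProduct_sub, sub_nonneg,
    dotProduct_mulVec_transpose_mul_self] at this

lemma Matrix.IsHermitian.eigenvalues_pos_of_posSemidef_sub (hS : S.IsHermitian) (hT : IsUnit T)
    (hTS : (S - Tᵀ * T).PosSemidef) (i : n) : 0 < hS.eigenvalues i := by
  have hSpd : S.PosDef := by
    simpa using (posDef_transpose_mul_self_of_isUnit hT).add_posSemidef hTS
  exact hSpd.eigenvalues_pos i

lemma Matrix.IsHermitian.one_sub_eigenvalues_div_le (hS : S.IsHermitian) (hSL : S + Lᵀ * L = 1)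
    (hT : IsUnit T) (hTS : (S - Tᵀ * T).PosSemidef) (i : n) :
    (1 - hS.eigenvalues i) / hS.eigenvalues i ≤ ‖L * T⁻¹‖ ^ 2 := by
  obtain ⟨v, hv, hvS⟩ := hS.exists_dotProduct_mulVec_eq_eigenvalues i
  have hLTv : (L * T⁻¹) *ᵥ (T *ᵥ v) = L *ᵥ v := by
    rw [mulVec_mulVec, Matrix.mul_assoc, nonsing_inv_mul T ((isUnit_iff_isUnit_det T).mp hT),
      Matrix.mul_one]
  rw [div_le_iff₀ (hS.eigenvalues_pos_of_posSemidef_sub hT hTS i)]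
  calc 1 - hS.eigenvalues i = (L *ᵥ v) ⬝ᵥ (L *ᵥ v) := by
        linarith [dotProduct_mulVec_add_of_add_eq_one hSL v]
    _ ≤ ‖L * T⁻¹‖ ^ 2 * ((T *ᵥ v) ⬝ᵥ (T *ᵥ v)) := hLTv ▸ dotProduct_mulVec_self_le _ _
    _ ≤ ‖L * T⁻¹‖ ^ 2 * hS.eigenvalues i := by
        gcongr
        exact hvS ▸ dotProduct_mulVec_le_of_posSemidef_sub hTS v

lemma Matrix.IsHermitian.l2_opNorm_mul_inv_le (hS : S.IsHermitian) (hSL : S + Lᵀ * L = 1)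
    (hT : IsUnit T) (hST : S = Tᵀ * T) {c : ℝ} (hc : 0 ≤ c)
    (h : ∀ i, (1 - hS.eigenvalues i) / hS.eigenvalues i ≤ c ^ 2) : ‖L * T⁻¹‖ ≤ c := by
  have hc' : 0 < 1 + c ^ 2 := by positivity
  have hS_ge : (S - (1 + c ^ 2)⁻¹ • 1).PosSemidef := by
    refine hS.posSemidef_sub_smul_one fun i => ?_
    have hpos := hS.eigenvalues_pos_of_posSemidef_sub hT (by rw [hST, sub_self]; exact .zero) i
    have := (div_le_iff₀ hpos).mp (h i)
    rw [inv_le_iff_one_le_mul₀ hc']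
    linarith
  refine l2_opNorm_le_of_dotProduct_le _ hc fun x => ?_
  -- with `y = T⁻¹ x`: `‖x‖² = yᵀ S y` and `‖L T⁻¹ x‖² = ‖y‖² - yᵀ S y ≤ c² yᵀ S y`
  set y := T⁻¹ *ᵥ x
  have hTy : T *ᵥ y = x := by
    rw [mulVec_mulVec, mul_nonsing_inv T ((isUnit_iff_isUnit_det T).mp hT), one_mulVec]
  have hx : x ⬝ᵥ x = y ⬝ᵥ (S *ᵥ y) := by
    rw [← hTy, ← dotProduct_mulVec_transpose_mul_self, hST]
  have hy : y ⬝ᵥ y ≤ (1 + c ^ 2) * (y ⬝ᵥ (S *ᵥ y)) := by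
    have := hS_ge.dotProduct_mulVec_nonneg y
    rwa [star_trivial, sub_mulVec, dotProduct_sub, smul_mulVec, one_mulVec, dotProduct_smul,
      smul_eq_mul, sub_nonneg, inv_mul_le_iff₀ hc'] at this
  rw [← mulVec_mulVec, hx]
  linarith [dotProduct_mulVec_add_of_add_eq_one hSL y]

lemma Matrix.IsHermitian.sum_one_sub_eigenvalues_div_eq_trace (hS : S.IsHermitian)
    (hSL : S + Lᵀ * L = 1) (h₀ : ∀ i, hS.eigenvalues i ≠ 0) :
    ∑ i, (1 - hS.eigenvalues i) / hS.eigenvalues i = (Lᵀ * L * S⁻¹).trace := by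
  have hS₀ : IsUnit S.det := by
    rw [hS.det_eq_prod_eigenvalues, isUnit_iff_ne_zero, Finset.prod_ne_zero_iff]
    exact fun i _ => by simpa using h₀ i
  rw [eq_sub_of_add_eq' hSL, Matrix.sub_mul, Matrix.one_mul, mul_nonsing_inv S hS₀, trace_sub,
    hS.trace_inv h₀, trace_one]
  have h : ∀ i, (1 - hS.eigenvalues i) / hS.eigenvalues i = (hS.eigenvalues i)⁻¹ - 1 :=
    fun i => by field_simp [h₀ i]
  simp [h, Finset.sum_sub_distrib]

lemma Matrix.IsHermitian.sum_one_sub_eigenvalues_div_le_trace (hS : S.IsHermitian)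
    (hSL : S + Lᵀ * L = 1) (hT : IsUnit T) (hTS : (S - Tᵀ * T).PosSemidef) :
    ∑ i, (1 - hS.eigenvalues i) / hS.eigenvalues i ≤ ((L * T⁻¹)ᵀ * (L * T⁻¹)).trace := by
  have hgap := trace_transpose_mul_self_mul_nonneg L
    ((posDef_transpose_mul_self_of_isUnit hT).posSemidef_inv_sub_inv hTS)
  rw [Matrix.mul_sub, trace_sub, sub_nonneg] at hgap
  rwa [hS.sum_one_sub_eigenvalues_div_eq_trace hSL
    fun i => (hS.eigenvalues_pos_of_posSemidef_sub hT hTS i).ne',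
    trace_transpose_mul_self_of_mul_inv]

variable {t : n → ℝ} (e : n ≃ n)

lemma Matrix.IsHermitian.norm_le_l2_opNorm_mul_inv (hS : S.IsHermitian) (hSL : S + Lᵀ * L = 1)
    (hT : IsUnit T) (hTS : (S - Tᵀ * T).PosSemidef) (ht : ∀ j, 0 ≤ t j)
    (ht_sq : ∀ j, t j ^ 2 = (1 - hS.eigenvalues (e j)) / hS.eigenvalues (e j)) :
    ‖t‖ ≤ ‖L * T⁻¹‖ :=
  (pi_norm_le_iff_of_nonneg (norm_nonneg _)).mpr fun j => by
    rw [Real.norm_of_nonneg (ht j), ← pow_le_pow_iff_left₀ (ht j) (norm_nonneg _) two_ne_zero,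
      ht_sq]
    exact hS.one_sub_eigenvalues_div_le hSL hT hTS (e j)

lemma Matrix.IsHermitian.norm_eq_l2_opNorm_mul_inv (hS : S.IsHermitian) (hSL : S + Lᵀ * L = 1)
    (hT : IsUnit T) (hST : S = Tᵀ * T) (ht : ∀ j, 0 ≤ t j)
    (ht_sq : ∀ j, t j ^ 2 = (1 - hS.eigenvalues (e j)) / hS.eigenvalues (e j)) :
    ‖t‖ = ‖L * T⁻¹‖ := by
  have hTS : (S - Tᵀ * T).PosSemidef := by rw [hST, sub_self]; exact .zero
  refine le_antisymm (hS.norm_le_l2_opNorm_mul_inv e hSL hT hTS ht ht_sq)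
    (hS.l2_opNorm_mul_inv_le hSL hT hST (norm_nonneg _) fun i => ?_)
  rw [← e.apply_symm_apply i, ← ht_sq]
  exact pow_le_pow_left₀ (ht _) ((Real.le_norm_self _).trans (norm_le_pi_norm t _)) 2

end SchurQuotient

section Rows

variable {R : Type*} {d n : ℕ}

def upperRows {q : ℕ} (h : q ≤ d) (A : Matrix (Fin d) (Fin n) R) : Matrix (Fin q) (Fin n) R :=
  A.submatrix (Fin.castLE h) id

def lowerRows (q : ℕ) (A : Matrix (Fin d) (Fin n) R) : Matrix (Fin (d - q)) (Fin n) R :=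
  A.submatrix (fun i => ⟨q + i, by have := i.isLt; omega⟩) id

/-- The matrix `[I_q; 0]`, whose columns span the first `q` coordinate axes. -/
def coordinateEmbedding (R : Type*) [Zero R] [One R] (d q : ℕ) : Matrix (Fin d) (Fin q) R :=
  Matrix.of fun i j => if (i : ℕ) = (j : ℕ) then 1 else 0

lemma transpose_mul_self_eq_upperRows_add_lowerRows [NonUnitalNonAssocSemiring R] {q : ℕ}
    (h : q ≤ d) (A : Matrix (Fin d) (Fin n) R) :
    Aᵀ * A = (upperRows h A)ᵀ * upperRows h A + (lowerRows q A)ᵀ * lowerRows q A := by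
  ext j k
  simp only [Matrix.add_apply, Matrix.mul_apply, Matrix.transpose_apply]
  rw [← (finCongr (Nat.add_sub_cancel' h)).sum_comp, Fin.sum_univ_add]
  rfl

lemma posSemidef_upperRows_transpose_mul_self_sub {p q : ℕ} (hpq : p ≤ q) (hqd : q ≤ d)
    (A : Matrix (Fin d) (Fin n) ℝ) :
    ((upperRows hqd A)ᵀ * upperRows hqd A -
      (upperRows (hpq.trans hqd) A)ᵀ * upperRows (hpq.trans hqd) A).PosSemidef := by
  rw [transpose_mul_self_eq_upperRows_add_lowerRows hpq (upperRows hqd A)]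
  convert posSemidef_transpose_mul_self (lowerRows p (upperRows hqd A)) using 1
  exact add_sub_cancel_left _ _

lemma transpose_mul_coordinateEmbedding [NonAssocSemiring R] {q : ℕ} (h : q ≤ d)
    (A : Matrix (Fin d) (Fin n) R) : Aᵀ * coordinateEmbedding R d q = (upperRows h A)ᵀ := by
  ext k l
  rw [Matrix.mul_apply, Finset.sum_eq_single (Fin.castLE h l)]
  · simp [upperRows, coordinateEmbedding]
  · intro i _ hi
    simp [coordinateEmbedding, show (i : ℕ) ≠ l from fun h' => hi (Fin.ext h')]
  · simp

lemma transpose_mul_coordinateEmbedding_mul_transpose [CommSemiring R] {q : ℕ} (h : q ≤ d)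
    (A : Matrix (Fin d) (Fin n) R) :
    (Aᵀ * coordinateEmbedding R d q) * (Aᵀ * coordinateEmbedding R d q)ᵀ =
      (upperRows h A)ᵀ * upperRows h A := by
  rw [transpose_mul_coordinateEmbedding h, transpose_transpose]

end Rows

section TopBlock

variable {d p : ℕ} (h : p ≤ d)

lemma topBlock_mul (A : Matrix (Fin d) (Fin p) ℝ) (P : Matrix (Fin p) (Fin p) ℝ) :
    topBlock h (A * P) = topBlock h A * P :=
  rfl

lemma isUnit_topBlock_and_isUnit_of_isUnit_topBlock_mul
    {A : Matrix (Fin d) (Fin p) ℝ} {P : Matrix (Fin p) (Fin p) ℝ}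
    (hAP : IsUnit (topBlock h (A * P))) : IsUnit (topBlock h A) ∧ IsUnit P := by
  rw [topBlock_mul, isUnit_iff_isUnit_det, det_mul] at hAP
  exact ⟨(isUnit_iff_isUnit_det _).mpr (isUnit_of_mul_isUnit_left hAP),
    (isUnit_iff_isUnit_det _).mpr (isUnit_of_mul_isUnit_right hAP)⟩

lemma lowerRows_mul_inv_topBlock_mul {q : ℕ} (A : Matrix (Fin d) (Fin p) ℝ)
    {P : Matrix (Fin p) (Fin p) ℝ} (hP : IsUnit P) :
    lowerRows q (A * P) * (topBlock h (A * P))⁻¹ = lowerRows q A * (topBlock h A)⁻¹ := by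
  rw [topBlock_mul, show lowerRows q (A * P) = lowerRows q A * P by ext; rfl, Matrix.mul_inv_rev,
    Matrix.mul_assoc, ← Matrix.mul_assoc P, mul_nonsing_inv P ((isUnit_iff_isUnit_det P).mp hP),
    Matrix.one_mul]

end TopBlock

/-- Tangents of the canonical angles between `span X` and the coordinate subspace
`span(e₁,…,e_q)` are controlled by the Schur-quotient block `𝒯_q(X)`:
all angles are `< π/2` and `‖diag(tan θ)‖ ≤ ‖𝒯_q(X)‖` in both the spectral and the
Frobenius norm, with equality when `p = q`. -/
theorem tan_theta_bound (d p q : ℕ) (hpq : p ≤ q) (hqd : q < d)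
    (X : Matrix (Fin d) (Fin p) ℝ)
    (hX : IsUnit (topBlock (hpq.trans hqd.le) X))
    (A : Matrix (Fin d) (Fin p) ℝ) (hA : Aᵀ * A = 1)
    (P : Matrix (Fin p) (Fin p) ℝ) (hXA : X = A * P)
    (θ : Fin p → ℝ)
    (hθ : IsCanonAngles A
      (Matrix.of fun (i : Fin d) (j : Fin q) => if (i : ℕ) = (j : ℕ) then (1 : ℝ) else 0) θ) :
    let Tq : Matrix (Fin (d - q)) (Fin p) ℝ :=
      (Matrix.of fun (i : Fin (d - q)) (j : Fin p) => X ⟨q + i, by have := i.isLt; omega⟩ j) *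
        (topBlock (hpq.trans hqd.le) X)⁻¹
    (∀ j, θ j < Real.pi / 2) ∧
    specNorm (Matrix.diagonal fun j => Real.tan (θ j)) ≤ specNorm Tq ∧
    frobNorm (Matrix.diagonal fun j => Real.tan (θ j)) ≤ frobNorm Tq ∧
    (p = q →
      specNorm (Matrix.diagonal fun j => Real.tan (θ j)) = specNorm Tq ∧
      frobNorm (Matrix.diagonal fun j => Real.tan (θ j)) = frobNorm Tq) := by
  subst hXA
  intro Tq
  change IsCanonAngles A (coordinateEmbedding ℝ d q) θ at hθ
  rw [IsCanonAngles] at hθ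
  set S := (Aᵀ * coordinateEmbedding ℝ d q) * (Aᵀ * coordinateEmbedding ℝ d q)ᵀ with hSU
  obtain ⟨-, hθ_mem, hS, e, hcos⟩ := hθ
  rw [transpose_mul_coordinateEmbedding_mul_transpose hqd.le] at hSU
  have hSL : S + (lowerRows q A)ᵀ * lowerRows q A = 1 := by
    rw [hSU, ← transpose_mul_self_eq_upperRows_add_lowerRows, hA]
  have hTS : (S - (topBlock _ A)ᵀ * topBlock _ A).PosSemidef :=
    hSU ▸ posSemidef_upperRows_transpose_mul_self_sub hpq hqd.le A
  obtain ⟨hT, hP⟩ := isUnit_topBlock_and_isUnit_of_isUnit_topBlock_mul _ hX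
  have hTq : Tq = lowerRows q A * (topBlock _ A)⁻¹ := lowerRows_mul_inv_topBlock_mul _ A hP
  have hpos := hS.eigenvalues_pos_of_posSemidef_sub hT hTS
  have htan_nonneg j := Real.tan_nonneg_of_nonneg_of_le_pi_div_two (hθ_mem j).1 (hθ_mem j).2
  have htan_sq j : Real.tan (θ j) ^ 2 = (1 - hS.eigenvalues (e j)) / hS.eigenvalues (e j) := by
    rw [Real.tan_eq_sin_div_cos, div_pow, Real.sin_sq, hcos j]
  have hsum : ∑ j, Real.tan (θ j) ^ 2 = ∑ i, (1 - hS.eigenvalues i) / hS.eigenvalues i := by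
    simp only [htan_sq, e.sum_comp fun i => (1 - hS.eigenvalues i) / hS.eigenvalues i]
  rw [specNorm_eq_l2_opNorm, specNorm_eq_l2_opNorm, l2_opNorm_diagonal, frobNorm_diagonal,
    frobNorm_eq_sqrt_trace, hTq, hsum]
  refine ⟨fun j => (hθ_mem j).2.lt_of_ne fun h => (hpos (e j)).ne (by simpa [h] using hcos j),
    hS.norm_le_l2_opNorm_mul_inv e hSL hT hTS htan_nonneg htan_sq,
    Real.sqrt_le_sqrt (hS.sum_one_sub_eigenvalues_div_le_trace hSL hT hTS), ?_⟩
  rintro rfl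
  exact ⟨hS.norm_eq_l2_opNorm_mul_inv e hSL hT hSU htan_nonneg htan_sq, by
    rw [hS.sum_one_sub_eigenvalues_div_eq_trace hSL fun i => (hpos i).ne', hSU,
      ← trace_transpose_mul_self_of_mul_inv]
    rfl⟩
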